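/- arXiv:1911.08772 — 2 statements merged into one kernel-verified Lean document; each statement's English description precedes it below -/
import Mathlib

section
/- Let d > 0 be a real number and let f : [0, d] → ℝ be a convex function with f(x) ≥ 0 for all x ∈ [0, d] and f(x) ≤ 1 − x/d for all x ∈ [0, d]. Then for every real k with 0 ≤ k ≤ d, the tail integral satisfies ∫_k^d f(x) dx ≤ (1 − k/d)² · ∫_0^d f(x) dx. -/
open MeasureTheory Set

open intervalIntegral in
lemma lin_int_helper (c d a b : ℝ) :
    (∫ x in a..b, c * (d - x)) = c * (d * (b - a) - (b ^ 2 - a ^ 2) / 2) := by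
  rw [intervalIntegral.integral_const_mul, integral_sub intervalIntegrable_const intervalIntegrable_id,
    intervalIntegral.integral_const, integral_id]
  simp only [smul_eq_mul]
  ring

/-- Continuous area argument: if `f` is convex on `[0, d]`, nonnegative there, and lies
below the reference line `y = 1 − x/d`, then for every `0 ≤ k ≤ d` the tail integral
satisfies `∫_k^d f ≤ (1 − k/d)² · ∫_0^d f`. -/
theorem tail_integral_le_of_convex_below_line
    (d : ℝ) (hd : 0 < d) (f : ℝ → ℝ)
    (hconv : ConvexOn ℝ (Set.Icc 0 d) f)
    (hnonneg : ∀ x ∈ Set.Icc (0 : ℝ) d, 0 ≤ f x)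
    (hline : ∀ x ∈ Set.Icc (0 : ℝ) d, f x ≤ 1 - x / d)
    (k : ℝ) (hk0 : 0 ≤ k) (hkd : k ≤ d) :
    (∫ x in k..d, f x) ≤ (1 - k / d) ^ 2 * ∫ x in (0 : ℝ)..d, f x := by
  -- integrability of f on subintervals of [0, d]
  have hmeas : IntegrableOn f (Set.Ioc 0 d) := by
    rw [integrableOn_Ioc_iff_integrableOn_Ioo]
    have hc : ContinuousOn f (Set.Ioo 0 d) := by
      have := hconv.continuousOn_interior
      rwa [interior_Icc] at this
    refine ⟨hc.aestronglyMeasurable measurableSet_Ioo,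
      HasFiniteIntegral.restrict_of_bounded (C := 1) measure_Ioo_lt_top ?_⟩
    filter_upwards [ae_restrict_mem measurableSet_Ioo] with x hx
    have hx' : x ∈ Set.Icc (0 : ℝ) d := Set.Ioo_subset_Icc_self hx
    rw [Real.norm_eq_abs, abs_of_nonneg (hnonneg x hx')]
    have h1 := hline x hx'
    have h2 : 0 ≤ x / d := div_nonneg hx'.1 hd.le
    linarith
  have hint : ∀ a b : ℝ, 0 ≤ a → a ≤ d → 0 ≤ b → b ≤ d →
      IntervalIntegrable f volume a b := by
    intro a b ha had hb hbd
    rw [intervalIntegrable_iff]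
    refine hmeas.mono_set ?_
    rw [Set.uIoc]
    exact Set.Ioc_subset_Ioc (le_min ha hb) (max_le had hbd)
  rcases eq_or_lt_of_le hkd with rfl | hklt
  · simp [div_self hd.ne']
  -- main case k < d
  have hdk : 0 < d - k := sub_pos.2 hklt
  have hfd : f d = 0 :=
    le_antisymm (by simpa [div_self hd.ne'] using hline d ⟨hd.le, le_rfl⟩)
      (hnonneg d ⟨hd.le, le_rfl⟩)
  have hFk : 0 ≤ f k := hnonneg k ⟨hk0, hkd⟩
  set c : ℝ := f k / (d - k) with hc
  have hc0 : 0 ≤ c := div_nonneg hFk hdk.le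
  -- upper chord bound on [k, d]
  have hup : ∀ x ∈ Set.Icc k d, f x ≤ c * (d - x) := by
    intro x hx
    obtain ⟨hx1, hx2⟩ := hx
    have key := hconv.2 (Set.mem_Icc.2 ⟨hk0, hkd⟩) (Set.mem_Icc.2 ⟨hd.le, le_rfl⟩)
      (div_nonneg (by linarith) hdk.le)
      (div_nonneg (by linarith) hdk.le)
      (show (d - x) / (d - k) + (x - k) / (d - k) = 1 by field_simp; ring)
    have hcomb : ((d - x) / (d - k)) • k + ((x - k) / (d - k)) • d = x := by
      rw [smul_eq_mul, smul_eq_mul, div_mul_eq_mul_div, div_mul_eq_mul_div, ← add_div,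
        div_eq_iff hdk.ne']
      ring
    rw [hcomb, hfd, smul_eq_mul, smul_eq_mul] at key
    have : (d - x) / (d - k) * f k = c * (d - x) := by
      rw [hc]; ring
    linarith [key, this.symm.le]
  -- lower chord bound on [0, k]
  have hlow : ∀ x ∈ Set.Icc (0 : ℝ) k, c * (d - x) ≤ f x := by
    intro x hx
    obtain ⟨hx1, hx2⟩ := hx
    have hdx : 0 < d - x := by linarith
    have key := hconv.2 (Set.mem_Icc.2 ⟨hx1, by linarith⟩) (Set.mem_Icc.2 ⟨hd.le, le_rfl⟩)
      (div_nonneg hdk.le hdx.le)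
      (div_nonneg (by linarith) hdx.le)
      (show (d - k) / (d - x) + (k - x) / (d - x) = 1 by field_simp; ring)
    have hcomb : ((d - k) / (d - x)) • x + ((k - x) / (d - x)) • d = k := by
      rw [smul_eq_mul, smul_eq_mul, div_mul_eq_mul_div, div_mul_eq_mul_div, ← add_div,
        div_eq_iff hdx.ne']
      ring
    rw [hcomb, hfd, smul_eq_mul, smul_eq_mul, mul_zero, add_zero] at key
    -- key : f k ≤ (d - k) / (d - x) * f x
    have h3 : f k * (d - x) ≤ f x * (d - k) := by
      have := mul_le_mul_of_nonneg_right key hdx.le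
      calc f k * (d - x) ≤ (d - k) / (d - x) * f x * (d - x) := this
        _ = f x * (d - k) := by field_simp
    rw [hc, div_mul_eq_mul_div, div_le_iff₀ hdk]
    linarith
  -- integral bounds
  have hlinint : IntervalIntegrable (fun x => c * (d - x)) volume k d :=
    (Continuous.intervalIntegrable (by fun_prop) k d)
  have hlinint2 : IntervalIntegrable (fun x => c * (d - x)) volume 0 k :=
    (Continuous.intervalIntegrable (by fun_prop) 0 k)
  have hT : (∫ x in k..d, f x) ≤ f k * (d - k) / 2 := by
    have h := intervalIntegral.integral_mono_on hklt.le
      (hint k d hk0 hkd hd.le le_rfl) hlinint hup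
    rw [lin_int_helper] at h
    calc (∫ x in k..d, f x) ≤ c * (d * (d - k) - (d ^ 2 - k ^ 2) / 2) := h
      _ = f k / (d - k) * ((d - k) ^ 2 / 2) := by rw [hc]; ring_nf
      _ = f k * (d - k) / 2 := by field_simp
  have hS : f k * (k * (2 * d - k)) / (2 * (d - k)) ≤ ∫ x in (0:ℝ)..k, f x := by
    have h := intervalIntegral.integral_mono_on hk0
      hlinint2 (hint 0 k le_rfl hd.le hk0 hkd) hlow
    rw [lin_int_helper] at h
    calc f k * (k * (2 * d - k)) / (2 * (d - k))
        = c * (d * (k - 0) - (k ^ 2 - 0 ^ 2) / 2) := by rw [hc]; field_simp; ring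
      _ ≤ ∫ x in (0:ℝ)..k, f x := h
  -- combine
  have hA : (∫ x in (0:ℝ)..d, f x) = (∫ x in (0:ℝ)..k, f x) + ∫ x in k..d, f x :=
    (intervalIntegral.integral_add_adjacent_intervals
      (hint 0 k le_rfl hd.le hk0 hkd) (hint k d hk0 hkd hd.le le_rfl)).symm
  rw [hA]
  set S : ℝ := ∫ x in (0:ℝ)..k, f x
  set T : ℝ := ∫ x in k..d, f x
  rw [div_le_iff₀ (by positivity : (0:ℝ) < 2 * (d - k))] at hS
  have h1 : (1 : ℝ) - k / d = (d - k) / d := by field_simp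
  rw [h1, div_pow, div_mul_eq_mul_div, le_div_iff₀ (by positivity : (0:ℝ) < d ^ 2)]
  nlinarith [mul_le_mul_of_nonneg_right hT (mul_nonneg hk0 (by linarith : (0:ℝ) ≤ 2 * d - k)),
    mul_le_mul_of_nonneg_right hS hdk.le]
end

section
/- Let d ≥ 1 be an integer and let a_1, a_2, …, a_d be real numbers such that (i) a_i ≥ 0 for all 1 ≤ i ≤ d, (ii) a_i ≤ 1 − i/d for all 1 ≤ i ≤ d, and (iii) the sequence is convex, i.e., a_{i−1} − 2a_i + a_{i+1} ≥ 0 for all 2 ≤ i ≤ d−1. Then for every integer k with 0 ≤ k ≤ d, ∑_{i=k+1}^{d} a_i ≤ (1 − k/d)² · ∑_{i=1}^{d} a_i. -/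
/-!
Extend `a` by zero from `d` on. A sequence vanishing from `d` on is the combination of the tents
`i ↦ (m - i)₊`, `m ≤ d`, weighted by its second differences at `m`; convexity (and, at the kink
`m = d`, nonnegativity of `a (d - 1)`) makes these weights nonnegative. The tail sum of the tent
with kink at `m` beyond `k` is `C(m - k, 2)`, and `C(m - k, 2) ≤ (1 - k/d)² C(m, 2)` because both
`(m - k) / m` and `(m - k - 1) / (m - 1)` are at most `(d - k) / d`.
-/

open Finset

lemma sum_Ioo_natCast_sub (k m : ℕ) :
    ∑ i ∈ Ioo k m, ((m : ℝ) - i) = ((m - k).choose 2 : ℕ) := by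
  induction m with
  | zero => simp
  | succ m ih =>
    rw [Ioo_add_one_right_eq_Ioc]
    obtain hkm | hkm := le_or_gt m k
    · rw [Ioc_eq_empty_of_le hkm, Nat.choose_eq_zero_of_lt (by omega)]
      simp
    · have hshift : ∀ i ∈ Ioo k m, ((m + 1 : ℕ) : ℝ) - i = ((m : ℝ) - i) + 1 := by
        intro i _
        push_cast
        ring
      rw [Ioc_eq_cons_Ioo hkm, sum_cons, sum_congr rfl hshift, sum_add_distrib, ih,
        Nat.sub_add_comm hkm.le]
      simp only [sum_const, Nat.card_Ioo, nsmul_eq_mul, mul_one, Nat.cast_choose_two]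
      push_cast [Nat.cast_sub hkm.le, Nat.cast_sub (show 1 ≤ m - k by omega)]
      ring

lemma choose_two_sub_le {m N : ℕ} (hm : m ≤ N) (k : ℕ) :
    (((m - k).choose 2 : ℕ) : ℝ) ≤ (1 - (k : ℝ) / N) ^ 2 * (m.choose 2 : ℕ) := by
  obtain hkm | hkm := le_or_gt m k
  · rw [Nat.sub_eq_zero_of_le hkm, Nat.choose_zero_succ, Nat.cast_zero]
    positivity
  have hN : (0 : ℝ) < N := by exact_mod_cast (k.zero_le.trans_lt hkm).trans_le hm
  have hmN : (m : ℝ) ≤ N := by exact_mod_cast hm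
  have hkm' : (k : ℝ) + 1 ≤ m := by exact_mod_cast hkm
  have hk : (0 : ℝ) ≤ k := k.cast_nonneg
  have h₁ : ((m : ℝ) - k) * N ≤ (N - k) * m := by nlinarith
  have h₂ : ((m : ℝ) - k - 1) * N ≤ (N - k) * (m - 1) := by nlinarith
  have h := mul_le_mul h₁ h₂ (by nlinarith) (by nlinarith)
  rw [Nat.cast_choose_two, Nat.cast_choose_two, Nat.cast_sub hkm.le, one_sub_div hN.ne', div_pow,
    div_mul_eq_mul_div, le_div_iff₀ (by positivity)]
  linarith

def secondDiff (b : ℕ → ℝ) (m : ℕ) : ℝ := b (m - 1) - 2 * b m + b (m + 1)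

section VanishingTail

variable {b : ℕ → ℝ} {N : ℕ}

lemma sub_succ_eq_sum_secondDiff (hb : ∀ n, N ≤ n → b n = 0) (i : ℕ) :
    b i - b (i + 1) = ∑ m ∈ Ioc i N, secondDiff b m := by
  induction i using Nat.strong_decreasing_induction with
  | base =>
    exact ⟨N, fun i hi => by
      simp [hb i hi.le, hb (i + 1) (by omega), Ioc_eq_empty_of_le hi.le]⟩
  | step i ih =>
    obtain hi | hi := le_or_gt N i
    · simp [hb i hi, hb (i + 1) (by omega), Ioc_eq_empty_of_le hi]
    · rw [← Icc_add_one_left_eq_Ioc, Icc_eq_cons_Ioc hi, sum_cons, ← ih (i + 1) (by omega),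
        secondDiff, Nat.add_sub_cancel]
      ring

lemma eq_sum_secondDiff_mul_sub (hb : ∀ n, N ≤ n → b n = 0) (i : ℕ) :
    b i = ∑ m ∈ Ioc i N, secondDiff b m * ((m : ℝ) - i) := by
  induction i using Nat.strong_decreasing_induction with
  | base => exact ⟨N, fun i hi => by simp [hb i hi.le, Ioc_eq_empty_of_le hi.le]⟩
  | step i ih =>
    obtain hi | hi := le_or_gt N i
    · simp [hb i hi, Ioc_eq_empty_of_le hi]
    · have hshift : ∀ m ∈ Ioc i N, secondDiff b m * ((m : ℝ) - i)
          = secondDiff b m + secondDiff b m * ((m : ℝ) - (i + 1 : ℕ)) := by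
        intro m _
        push_cast
        ring
      rw [sum_congr rfl hshift, sum_add_distrib, ← sub_succ_eq_sum_secondDiff hb,
        ← Icc_add_one_left_eq_Ioc, Icc_eq_cons_Ioc hi, sum_cons, ← ih (i + 1) (by omega)]
      simp

lemma sum_Ioc_eq_sum_secondDiff_mul_choose (hb : ∀ n, N ≤ n → b n = 0) (k : ℕ) :
    ∑ i ∈ Ioc k N, b i = ∑ m ∈ Ioc (k + 1) N, secondDiff b m * ((m - k).choose 2 : ℕ) := by
  have hswap : ∀ i m, i ∈ Ioc k N ∧ m ∈ Ioc i N ↔ i ∈ Ioo k m ∧ m ∈ Ioc (k + 1) N := by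
    intro i m
    simp only [mem_Ioc, mem_Ioo]
    omega
  simp_rw [sum_congr rfl fun i _ => eq_sum_secondDiff_mul_sub hb i, sum_comm' hswap,
    ← mul_sum, sum_Ioo_natCast_sub]

theorem sum_Ioc_le_of_secondDiff_nonneg (hb : ∀ n, N ≤ n → b n = 0)
    (hconv : ∀ m ∈ Ioc 1 N, 0 ≤ secondDiff b m) (k : ℕ) :
    ∑ i ∈ Ioc k N, b i ≤ (1 - (k : ℝ) / N) ^ 2 * ∑ i ∈ Ioc 0 N, b i := by
  rw [sum_Ioc_eq_sum_secondDiff_mul_choose hb, sum_Ioc_eq_sum_secondDiff_mul_choose hb, mul_sum]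
  simp only [zero_add, Nat.sub_zero]
  have hsub : Ioc (k + 1) N ⊆ Ioc 1 N := Ioc_subset_Ioc_left (by omega)
  calc ∑ m ∈ Ioc (k + 1) N, secondDiff b m * ((m - k).choose 2 : ℕ)
      ≤ ∑ m ∈ Ioc (k + 1) N, (1 - (k : ℝ) / N) ^ 2 * (secondDiff b m * (m.choose 2 : ℕ)) :=
        sum_le_sum fun m hm => by
          rw [mul_left_comm]
          exact mul_le_mul_of_nonneg_left (choose_two_sub_le (mem_Ioc.1 hm).2 k)
            (hconv m (hsub hm))
    _ ≤ ∑ m ∈ Ioc 1 N, (1 - (k : ℝ) / N) ^ 2 * (secondDiff b m * (m.choose 2 : ℕ)) :=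
        sum_le_sum_of_subset_of_nonneg hsub fun m hm _ =>
          mul_nonneg (sq_nonneg _) (mul_nonneg (hconv m hm) (Nat.cast_nonneg _))

end VanishingTail

theorem tail_sum_le_of_convex_below_line_general
    (d : ℕ) (hd : 1 ≤ d) (a : ℕ → ℝ)
    (hnonneg : ∀ i, 1 ≤ i → i ≤ d → 0 ≤ a i)
    (hline : ∀ i, 1 ≤ i → i ≤ d → a i ≤ 1 - (i : ℝ) / d)
    (hconv : ∀ i, 2 ≤ i → i + 1 ≤ d → 0 ≤ a (i - 1) - 2 * a i + a (i + 1))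
    (k : ℕ) :
    ∑ i ∈ Finset.Icc (k + 1) d, a i
      ≤ (1 - (k : ℝ) / d) ^ 2 * ∑ i ∈ Finset.Icc 1 d, a i := by
  have had : a d = 0 := by
    have h := hline d hd le_rfl
    rw [div_self (by positivity)] at h
    linarith [hnonneg d hd le_rfl]
  set b : ℕ → ℝ := fun n => if n < d then a n else 0
  have hb : ∀ n, d ≤ n → b n = 0 := fun n hn => if_neg hn.not_gt
  have hab : ∀ n, n ≤ d → b n = a n := by
    intro n hn
    obtain hn | rfl := hn.lt_or_eq
    · exact if_pos hn
    · exact (hb n le_rfl).trans had.symm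
  have hsum : ∀ j, ∑ i ∈ Icc (j + 1) d, a i = ∑ i ∈ Ioc j d, b i := fun j => by
    rw [Icc_add_one_left_eq_Ioc]
    exact sum_congr rfl fun i hi => (hab i (mem_Ioc.1 hi).2).symm
  have hconvb : ∀ m ∈ Ioc 1 d, 0 ≤ secondDiff b m := by
    intro m hm
    obtain ⟨h1m, hmd⟩ := mem_Ioc.1 hm
    obtain hmd | rfl := hmd.lt_or_eq
    · rw [secondDiff, hab _ (by omega), hab _ hmd.le, hab _ hmd]
      exact hconv m h1m hmd
    · rw [secondDiff, hab _ (by omega), hb _ le_rfl, hb _ (by omega)]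
      simpa using hnonneg (m - 1) (by omega) (by omega)
  rw [hsum, show ∑ i ∈ Icc 1 d, a i = ∑ i ∈ Ioc 0 d, b i from hsum 0]
  exact sum_Ioc_le_of_secondDiff_nonneg hb hconvb k

/-- Discrete core of Theorem 1: if `a_1, …, a_d` is a nonnegative convex sequence lying
below the line `y = 1 − i/d`, then the tail sum satisfies
`∑_{i=k+1}^{d} a_i ≤ (1 − k/d)² · ∑_{i=1}^{d} a_i` for every `0 ≤ k ≤ d`. -/
theorem tail_sum_le_of_convex_below_line
    (d : ℕ) (hd : 1 ≤ d) (a : ℕ → ℝ)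
    (hnonneg : ∀ i, 1 ≤ i → i ≤ d → 0 ≤ a i)
    (hline : ∀ i, 1 ≤ i → i ≤ d → a i ≤ 1 - (i : ℝ) / d)
    (hconv : ∀ i, 2 ≤ i → i + 1 ≤ d → 0 ≤ a (i - 1) - 2 * a i + a (i + 1))
    (k : ℕ) (hkd : k ≤ d) :
    ∑ i ∈ Finset.Icc (k + 1) d, a i
      ≤ (1 - (k : ℝ) / d) ^ 2 * ∑ i ∈ Finset.Icc 1 d, a i :=
  tail_sum_le_of_convex_below_line_general d hd a hnonneg hline hconv k
end
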